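/- For every even integer j ≥ 6, the set S = {2, j, j+1} satisfies: k = 3j is a counterexample for S (indeed MinCost_S(3j) = 3 while GreedyCost_S(3j) = j/2 + 1 ≥ 4), and no representable k with 0 < k < 3j is a counterexample; since 3j = F(S) + s_3 + s_2 where F(S) = j − 1 is the Frobenius number of ⟨2, j, j+1⟩, the upper bound in the critical-range theorem is tight. -/
import Mathlib


open Finset

/-- `a` is a representation of `k` with respect to the denominations `s`:
a vector of nonnegative integers with `∑ i, a i * s i = k`. -/
def IsRep {t : ℕ} (s : Fin t → ℕ) (k : ℕ) (a : Fin t → ℕ) : Prop :=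
  ∑ i, a i * s i = k

/-- `k` is representable with respect to `s`. -/
def Representable {t : ℕ} (s : Fin t → ℕ) (k : ℕ) : Prop :=
  ∃ a, IsRep s k a

/-- `MinCost_S(k)`: the minimum cost `∑ i, a i` over all representations `a` of `k`. -/
noncomputable def minCost {t : ℕ} (s : Fin t → ℕ) (k : ℕ) : ℕ :=
  sInf {c | ∃ a, IsRep s k a ∧ ∑ i, a i = c}

/-- `a` is the greedy representation of `k`: the representation whose reversed vector
`(a_t, …, a_1)` is greatest in lexicographic order among the reversed vectors of all
representations of `k`. -/
def IsGreedyRep {t : ℕ} (s : Fin t → ℕ) (k : ℕ) (a : Fin t → ℕ) : Prop :=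
  IsRep s k a ∧
    ∀ b, IsRep s k b → b = a ∨ ∃ i, b i < a i ∧ ∀ j, i < j → b j = a j

/-- `GreedyCost_S(k)`: the cost of the greedy representation of `k`
(the greedy representation is unique when it exists). -/
noncomputable def greedyCost {t : ℕ} (s : Fin t → ℕ) (k : ℕ) : ℕ :=
  sInf {c | ∃ a, IsGreedyRep s k a ∧ ∑ i, a i = c}

/-- The final remainder `r_0` of the naive greedy algorithm: for `i = t` down to `1`,
replace the current remainder `r` by `r % s_i`. -/
def greedyRem {t : ℕ} (s : Fin t → ℕ) (k : ℕ) : ℕ :=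
  ((List.ofFn s).reverse).foldl (· % ·) k

/-- A counterexample for `S`: a representable `k > 0` with `MinCost_S(k) < GreedyCost_S(k)`. -/
def IsCounterexample {t : ℕ} (s : Fin t → ℕ) (k : ℕ) : Prop :=
  0 < k ∧ Representable s k ∧ minCost s k < greedyCost s k

/-- A witness for `S`: a representable `k > 0` such that for some generator `s i` with
`k - s i` nonnegative and representable, `GreedyCost_S(k) > GreedyCost_S(k - s i) + 1`. -/
def IsWitness {t : ℕ} (s : Fin t → ℕ) (k : ℕ) : Prop :=
  0 < k ∧ Representable s k ∧ ∃ i : Fin t, s i ≤ k ∧ Representable s (k - s i) ∧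
    greedyCost s (k - s i) + 1 < greedyCost s k

section Aux

lemma cv0 {α : Type*} (x y z : α) : ![x,y,z] 0 = x := rfl
lemma cv1 {α : Type*} (x y z : α) : ![x,y,z] 1 = y := rfl
lemma cv2 {α : Type*} (x y z : α) : ![x,y,z] 2 = z := rfl

lemma fin3_cases (p : Fin 3 → Prop) (h0 : p 0) (h1 : p 1) (h2 : p 2) : ∀ i, p i := by
  intro i; fin_cases i <;> assumption

lemma rep_eq {j k : ℕ} {a : Fin 3 → ℕ} (h : IsRep ![2,j,j+1] k a) :
    a 0 * 2 + a 1 * j + a 2 * (j+1) = k := by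
  simpa [IsRep, Fin.sum_univ_three] using h

lemma rep_of_eq {j k : ℕ} {a : Fin 3 → ℕ} (h : a 0 * 2 + a 1 * j + a 2 * (j+1) = k) :
    IsRep ![2,j,j+1] k a := by
  simpa [IsRep, Fin.sum_univ_three] using h

lemma rep_facts {j k : ℕ} (hj : 6 ≤ j) (hk : k ≤ 3 * j) {b : Fin 3 → ℕ}
    (hb : IsRep ![2,j,j+1] k b) :
    b 0 * 2 + b 1 * j + b 2 * (j+1) = k ∧ b 1 ≤ 3 ∧ b 2 ≤ 2 := by
  have e := rep_eq hb
  have hy : b 1 * j ≤ k := by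
    calc b 1 * j ≤ b 0 * 2 + b 1 * j + b 2 * (j+1) :=
          le_trans (Nat.le_add_left _ _) (Nat.le_add_right _ _)
      _ = k := e
  have hz : b 2 * (j+1) ≤ k := by
    calc b 2 * (j+1) ≤ b 0 * 2 + b 1 * j + b 2 * (j+1) := Nat.le_add_left _ _
      _ = k := e
  refine ⟨e, ?_, ?_⟩
  · by_contra h
    have h4 : 4 * j ≤ b 1 * j := Nat.mul_le_mul_right j (by omega)
    omega
  · by_contra h
    have h4 : 3 * (j+1) ≤ b 2 * (j+1) := Nat.mul_le_mul_right (j+1) (by omega)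
    omega

lemma rep_enum {j k : ℕ} (hj : 6 ≤ j) (hk : k ≤ 3*j) {b : Fin 3 → ℕ}
    (hb : IsRep ![2,j,j+1] k b) (P : ℕ → ℕ → ℕ → Prop)
    (h : ∀ x y z, x*2 + y*j + z*(j+1) = k → y ≤ 3 → z ≤ 2 → P x y z) :
    P (b 0) (b 1) (b 2) := by
  obtain ⟨e, hy, hz⟩ := rep_facts hj hk hb
  exact h _ _ _ e hy hz

lemma isGreedyRep_unique {t : ℕ} {s : Fin t → ℕ} {k : ℕ} {a b : Fin t → ℕ}
    (ha : IsGreedyRep s k a) (hb : IsGreedyRep s k b) : a = b := by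
  rcases ha.2 b hb.1 with h | ⟨i, hi, hgt⟩
  · exact h.symm
  rcases hb.2 a ha.1 with h | ⟨i', hi', hgt'⟩
  · exact h
  rcases lt_trichotomy i i' with h | h | h
  · have := hgt i' h; omega
  · subst h; omega
  · have := hgt' i h; omega

lemma greedyCost_eq {t : ℕ} {s : Fin t → ℕ} {k : ℕ} {a : Fin t → ℕ}
    (ha : IsGreedyRep s k a) : greedyCost s k = ∑ i, a i := by
  have hset : {c | ∃ b, IsGreedyRep s k b ∧ ∑ i, b i = c} = {∑ i, a i} := by
    ext c
    constructor
    · rintro ⟨b, hb, rfl⟩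
      simp [isGreedyRep_unique hb ha]
    · intro hc
      rw [Set.mem_singleton_iff] at hc
      exact ⟨a, ha, hc.symm⟩
  rw [greedyCost, hset, csInf_singleton]

lemma greedy_eq' {j k x y z : ℕ}
    (ha : x * 2 + y * j + z * (j+1) = k)
    (h2 : ∀ b : Fin 3 → ℕ, IsRep ![2,j,j+1] k b → b 2 ≤ z)
    (h1 : ∀ b : Fin 3 → ℕ, IsRep ![2,j,j+1] k b → b 2 = z → b 1 ≤ y) :
    greedyCost ![2,j,j+1] k = x + y + z := by
  have ha' : IsRep ![2,j,j+1] k ![x,y,z] := rep_of_eq (by simpa [cv0, cv1, cv2] using ha)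
  have hg : IsGreedyRep ![2,j,j+1] k ![x,y,z] := by
    refine ⟨ha', fun b hb => ?_⟩
    rcases lt_or_eq_of_le (h2 b hb) with h | h
    · refine Or.inr ⟨2, by simpa [cv2] using h, ?_⟩
      exact fin3_cases (fun i => 2 < i → b i = ![x,y,z] i)
        (fun hi => absurd hi (by decide)) (fun hi => absurd hi (by decide))
        (fun hi => absurd hi (by decide))
    rcases lt_or_eq_of_le (h1 b hb h) with h' | h'
    · refine Or.inr ⟨1, by simpa [cv1] using h', ?_⟩
      exact fin3_cases (fun i => 1 < i → b i = ![x,y,z] i)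
        (fun hi => absurd hi (by decide)) (fun hi => absurd hi (by decide))
        (fun _ => by simpa [cv2] using h)
    · left
      have e := rep_eq hb
      rw [h, h'] at e
      have hx : b 0 = x := by omega
      exact funext (fin3_cases (fun i => b i = ![x,y,z] i)
        (by simpa [cv0] using hx) (by simpa [cv1] using h') (by simpa [cv2] using h))
  rw [greedyCost_eq hg]
  simp [Fin.sum_univ_three, cv0, cv1, cv2]

lemma min_eq' {j k x y z : ℕ}
    (ha : x * 2 + y * j + z * (j+1) = k)
    (hmin : ∀ b : Fin 3 → ℕ, IsRep ![2,j,j+1] k b → x + y + z ≤ b 0 + b 1 + b 2) :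
    minCost ![2,j,j+1] k = x + y + z := by
  have ha' : IsRep ![2,j,j+1] k ![x,y,z] := rep_of_eq (by simpa [cv0, cv1, cv2] using ha)
  have hmem : x + y + z ∈ {c | ∃ a, IsRep ![2,j,j+1] k a ∧ ∑ i, a i = c} :=
    ⟨![x,y,z], ha', by simp [Fin.sum_univ_three, cv0, cv1, cv2]⟩
  apply le_antisymm
  · exact Nat.sInf_le hmem
  · apply le_csInf ⟨_, hmem⟩
    rintro d ⟨b, hb, rfl⟩
    simpa [Fin.sum_univ_three] using hmin b hb

end Aux

/-- For even `j ≥ 6` and `S = {2, j, j + 1}`, the number `3j` is a counterexample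
(`MinCost_S(3j) = 3` while `GreedyCost_S(3j) = j/2 + 1 ≥ 4`), and no representable
`k` with `0 < k < 3j` is a counterexample; since `3j = F(S) + s₃ + s₂` with
`F(S) = j - 1`, the upper bound of the critical range is tight. -/
theorem upper_bound_tight (j : ℕ) (hj : 6 ≤ j) (heven : Even j) :
    minCost ![2, j, j + 1] (3 * j) = 3 ∧
    greedyCost ![2, j, j + 1] (3 * j) = j / 2 + 1 ∧
    4 ≤ j / 2 + 1 ∧
    (∀ k : ℕ, 0 < k → k < 3 * j → Representable ![2, j, j + 1] k →
      minCost ![2, j, j + 1] k = greedyCost ![2, j, j + 1] k) ∧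
    3 * j = (j - 1) + (j + 1) + j := by
  obtain ⟨m, hm⟩ := heven
  have hm' : j = 2 * m := by omega
  refine ⟨?_, ?_, by omega, ?_, by omega⟩
  · -- minCost (3j) = 3
    have h := min_eq' (j := j) (k := 3*j) (x := 0) (y := 3) (z := 0) (by omega) ?_
    · rw [h]
    · intro b hb
      exact rep_enum hj (le_refl _) hb (fun x y z => 0 + 3 + 0 ≤ x + y + z)
        (by intro x y z e hy hz; interval_cases y <;> interval_cases z <;> omega)
  · -- greedyCost (3j) = j/2 + 1
    have h := greedy_eq' (j := j) (k := 3*j) (x := m - 1) (y := 0) (z := 2) (by omega) ?_ ?_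
    · rw [h]; omega
    · intro b hb
      exact rep_enum hj (le_refl _) hb (fun x y z => z ≤ 2)
        (by intro x y z e hy hz; omega)
    · intro b hb hbz
      refine rep_enum hj (le_refl _) hb (fun x y z => z = 2 → y ≤ 0) ?_ hbz
      intro x y z e hy hz hz'
      subst hz'
      interval_cases y <;> omega
  · -- no counterexample below 3j
    intro k hpos hlt hrep
    obtain ⟨b₀, hb₀⟩ := hrep
    have hk3 : k ≤ 3 * j := by omega
    rcases (by omega : k % 2 = 0 ∨ k % 2 = 1) with hpar | hpar
    · -- even k
      rcases (by omega : k < j ∨ (j ≤ k ∧ k < 2*j) ∨ k = 2*j ∨ 2*j+2 ≤ k) with hc | hc | hc | hc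
      · -- k < j : rep (k/2, 0, 0)
        refine (min_eq' (x := k/2) (y := 0) (z := 0) (by omega) ?_).trans
          ((greedy_eq' (by omega) ?_ ?_).symm)
        · intro b hb
          exact rep_enum hj hk3 hb (fun x y z => k/2 + 0 + 0 ≤ x + y + z)
            (by intro x y z e hy hz; interval_cases y <;> interval_cases z <;> omega)
        · intro b hb
          exact rep_enum hj hk3 hb (fun x y z => z ≤ 0)
            (by intro x y z e hy hz; interval_cases y <;> interval_cases z <;> omega)
        · intro b hb hbz
          refine rep_enum hj hk3 hb (fun x y z => z = 0 → y ≤ 0) ?_ hbz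
          intro x y z e hy hz hz'
          subst hz'
          interval_cases y <;> omega
      · -- j ≤ k < 2j : rep ((k-j)/2, 1, 0)
        refine (min_eq' (x := (k-j)/2) (y := 1) (z := 0) (by omega) ?_).trans
          ((greedy_eq' (by omega) ?_ ?_).symm)
        · intro b hb
          exact rep_enum hj hk3 hb (fun x y z => (k-j)/2 + 1 + 0 ≤ x + y + z)
            (by intro x y z e hy hz; interval_cases y <;> interval_cases z <;> omega)
        · intro b hb
          exact rep_enum hj hk3 hb (fun x y z => z ≤ 0)
            (by intro x y z e hy hz; interval_cases y <;> interval_cases z <;> omega)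
        · intro b hb hbz
          refine rep_enum hj hk3 hb (fun x y z => z = 0 → y ≤ 1) ?_ hbz
          intro x y z e hy hz hz'
          subst hz'
          interval_cases y <;> omega
      · -- k = 2j : rep (0, 2, 0)
        refine (min_eq' (x := 0) (y := 2) (z := 0) (by omega) ?_).trans
          ((greedy_eq' (by omega) ?_ ?_).symm)
        · intro b hb
          exact rep_enum hj hk3 hb (fun x y z => 0 + 2 + 0 ≤ x + y + z)
            (by intro x y z e hy hz; interval_cases y <;> interval_cases z <;> omega)
        · intro b hb
          exact rep_enum hj hk3 hb (fun x y z => z ≤ 0)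
            (by intro x y z e hy hz; interval_cases y <;> interval_cases z <;> omega)
        · intro b hb hbz
          refine rep_enum hj hk3 hb (fun x y z => z = 0 → y ≤ 2) ?_ hbz
          intro x y z e hy hz hz'
          subst hz'
          interval_cases y <;> omega
      · -- 2j+2 ≤ k < 3j : rep ((k-(2j+2))/2, 0, 2)
        refine (min_eq' (x := (k-(2*j+2))/2) (y := 0) (z := 2) (by omega) ?_).trans
          ((greedy_eq' (by omega) ?_ ?_).symm)
        · intro b hb
          exact rep_enum hj hk3 hb (fun x y z => (k-(2*j+2))/2 + 0 + 2 ≤ x + y + z)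
            (by intro x y z e hy hz; interval_cases y <;> interval_cases z <;> omega)
        · intro b hb
          exact rep_enum hj hk3 hb (fun x y z => z ≤ 2)
            (by intro x y z e hy hz; omega)
        · intro b hb hbz
          refine rep_enum hj hk3 hb (fun x y z => z = 2 → y ≤ 0) ?_ hbz
          intro x y z e hy hz hz'
          subst hz'
          interval_cases y <;> omega
    · -- odd k
      have hk1 : j + 1 ≤ k :=
        rep_enum hj hk3 hb₀ (fun _ _ _ => j + 1 ≤ k)
          (by intro x y z e hy hz; interval_cases y <;> interval_cases z <;> omega)
      rcases (by omega : k ≤ 2*j ∨ 2*j+1 ≤ k) with hc | hc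
      · -- j+1 ≤ k ≤ 2j : rep ((k-(j+1))/2, 0, 1)
        refine (min_eq' (x := (k-(j+1))/2) (y := 0) (z := 1) (by omega) ?_).trans
          ((greedy_eq' (by omega) ?_ ?_).symm)
        · intro b hb
          exact rep_enum hj hk3 hb (fun x y z => (k-(j+1))/2 + 0 + 1 ≤ x + y + z)
            (by intro x y z e hy hz; interval_cases y <;> interval_cases z <;> omega)
        · intro b hb
          exact rep_enum hj hk3 hb (fun x y z => z ≤ 1)
            (by intro x y z e hy hz; interval_cases y <;> interval_cases z <;> omega)
        · intro b hb hbz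
          refine rep_enum hj hk3 hb (fun x y z => z = 1 → y ≤ 0) ?_ hbz
          intro x y z e hy hz hz'
          subst hz'
          interval_cases y <;> omega
      · -- 2j+1 ≤ k < 3j : rep ((k-(2j+1))/2, 1, 1)
        refine (min_eq' (x := (k-(2*j+1))/2) (y := 1) (z := 1) (by omega) ?_).trans
          ((greedy_eq' (by omega) ?_ ?_).symm)
        · intro b hb
          exact rep_enum hj hk3 hb (fun x y z => (k-(2*j+1))/2 + 1 + 1 ≤ x + y + z)
            (by intro x y z e hy hz; interval_cases y <;> interval_cases z <;> omega)
        · intro b hb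
          exact rep_enum hj hk3 hb (fun x y z => z ≤ 1)
            (by intro x y z e hy hz; interval_cases y <;> interval_cases z <;> omega)
        · intro b hb hbz
          refine rep_enum hj hk3 hb (fun x y z => z = 1 → y ≤ 1) ?_ hbz
          intro x y z e hy hz hz'
          subst hz'
          interval_cases y <;> omega
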